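/- arXiv:math/0611097 — 2 statements merged into one kernel-verified Lean document; each statement's English description precedes it below -/
import Mathlib

section
/- If u is a bijective ternary homomorphism (ternary automorphism) of a full Hilbert B-module E, then the unique *-homomorphism φ : B → B with ⟨ux, uy⟩ = φ(⟨x, y⟩) is a *-automorphism of B. -/
/-!
The kernel of `φ` is trivial: if `φ b = 0` then `⟨u (x • b), u (x • b)⟩ = φ (b* ⟨x, x⟩ b) = 0`,
so `x • b = 0` by injectivity of `u`, i.e. `⟨y, x⟩ b = 0` for all `x, y`; fullness makes the
inner products dense, so `b* b = 0`. An injective `*`-homomorphism of C*-algebras is isometric,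
so the range of `φ` is a closed subspace; by surjectivity of `u` it contains every `⟨x, y⟩`,
hence it is all of `B`.
-/

open scoped RightActions

/-- The December-2024 Mathlib `CStarModule` (right `Aᵐᵒᵖ`-action, inner product
`A`-linear on the right in the second variable), restated verbatim since Mathlib's
`CStarModule` now uses a left `A`-action with a different convention. -/
class CStarModuleRight (A E : Type*) [NonUnitalSemiring A] [StarRing A] [Module ℂ A]
    [AddCommGroup E] [Module ℂ E] [PartialOrder A] [SMul Aᵐᵒᵖ E] [Norm A] [Norm E]
    extends Inner A E where
  inner_add_right {x y z : E} : Inner.inner A x (y + z) = Inner.inner A x y + Inner.inner A x z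
  inner_self_nonneg {x : E} : 0 ≤ Inner.inner A x x
  inner_self {x : E} : Inner.inner A x x = 0 ↔ x = 0
  inner_op_smul_right {a : A} {x y : E} : Inner.inner A x (y <• a) = Inner.inner A x y * a
  inner_smul_right_complex {z : ℂ} {x y : E} : Inner.inner A x (z • y) = z • Inner.inner A x y
  star_inner (x y : E) : star (Inner.inner A x y) = Inner.inner A y x
  norm_eq_sqrt_norm_inner_self (x : E) : ‖x‖ = √‖Inner.inner A x x‖

open Submodule

namespace CStarModuleRight

section

variable {A E : Type*} [NonUnitalRing A] [StarRing A] [Module ℂ A] [AddCommGroup E] [Module ℂ E]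
  [PartialOrder A] [SMul Aᵐᵒᵖ E] [Norm A] [Norm E] [CStarModuleRight A E]

theorem inner_zero_right {x : E} : inner A x (0 : E) = 0 := by
  simpa using (inner_add_right (A := A) (x := x) (y := (0 : E)) (z := 0)).symm

theorem inner_zero_left {x : E} : inner A (0 : E) x = 0 := by
  rw [← star_inner, inner_zero_right, star_zero]

end

theorem inner_op_smul_left {A E : Type*} [NonUnitalSemiring A] [StarRing A] [Module ℂ A]
    [AddCommGroup E] [Module ℂ E] [PartialOrder A] [SMul Aᵐᵒᵖ E] [Norm A] [Norm E]
    [CStarModuleRight A E] {a : A} {x y : E} : inner A (x <• a) y = star a * inner A x y := by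
  rw [← star_inner, inner_op_smul_right, star_mul, star_inner]

end CStarModuleRight

theorem Submodule.eq_top_of_isClosed_of_subset {R M : Type*} [Semiring R] [TopologicalSpace M]
    [AddCommMonoid M] [Module R M] [ContinuousConstSMul R M] [ContinuousAdd M] {s : Set M}
    (hs : (span R s).topologicalClosure = ⊤) {p : Submodule R M} (hp : IsClosed (p : Set M))
    (hsp : s ⊆ p) : p = ⊤ :=
  top_le_iff.mp (hs ▸ topologicalClosure_minimal _ (span_le.mpr hsp) hp)

theorem CStarRing.eq_zero_of_forall_mul_eq_zero {B : Type*} [NonUnitalCStarAlgebra B]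
    {s : Set B} (hs : (span ℂ s).topologicalClosure = ⊤) {b : B} (h : ∀ c ∈ s, c * b = 0) :
    b = 0 := by
  have hmul : (ContinuousLinearMap.mul ℂ B).flip b = 0 :=
    ContinuousLinearMap.ext_on (dense_iff_topologicalClosure_eq_top.mpr hs) h
  exact (star_mul_self_eq_zero_iff b).mp (congrArg (· (star b)) hmul)

section InnerPreserving

variable {B E : Type*} [NonUnitalCStarAlgebra B] [PartialOrder B] [NormedAddCommGroup E]
  [NormedSpace ℂ E] [SMul Bᵐᵒᵖ E] [CStarModuleRight B E] {u : E → E} {φ : B →⋆ₙₐ[ℂ] B}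

theorem map_zero_of_inner_map_eq (hφ : ∀ x y : E, inner B (u x) (u y) = φ (inner B x y)) :
    u 0 = 0 :=
  CStarModuleRight.inner_self.mp (by rw [hφ, CStarModuleRight.inner_zero_left, map_zero])

theorem injective_of_inner_map_eq
    (hfull : (span ℂ {b : B | ∃ x y : E, inner B x y = b}).topologicalClosure = ⊤)
    (hφ : ∀ x y : E, inner B (u x) (u y) = φ (inner B x y)) (hu : Function.Injective u) :
    Function.Injective φ := by
  refine (injective_iff_map_eq_zero φ).mpr fun b hb ↦ ?_
  have hsmul (x : E) : x <• b = 0 := by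
    have hnorm : inner B (u (x <• b)) (u (x <• b)) = 0 := by
      rw [hφ, CStarModuleRight.inner_op_smul_right, CStarModuleRight.inner_op_smul_left,
        map_mul, hb, mul_zero]
    exact hu (by rw [CStarModuleRight.inner_self.mp hnorm, map_zero_of_inner_map_eq hφ])
  refine CStarRing.eq_zero_of_forall_mul_eq_zero hfull ?_
  rintro _ ⟨y, x, rfl⟩
  rw [← CStarModuleRight.inner_op_smul_right, hsmul, CStarModuleRight.inner_zero_right]

theorem surjective_of_inner_map_eq
    (hfull : (span ℂ {b : B | ∃ x y : E, inner B x y = b}).topologicalClosure = ⊤)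
    (hφ : ∀ x y : E, inner B (u x) (u y) = φ (inner B x y)) (hu : Function.Surjective u)
    (hφinj : Function.Injective φ) : Function.Surjective φ := by
  have hclosed : IsClosed (Set.range φ) :=
    (NonUnitalStarAlgHom.isometry φ hφinj).isClosedEmbedding.isClosed_range
  refine LinearMap.range_eq_top.mp <|
    eq_top_of_isClosed_of_subset hfull (p := LinearMap.range (φ : B →ₗ[ℂ] B)) hclosed ?_
  rintro _ ⟨x, y, rfl⟩
  obtain ⟨x, rfl⟩ := hu x
  obtain ⟨y, rfl⟩ := hu y
  exact ⟨inner B x y, (hφ x y).symm⟩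

end InnerPreserving

theorem stmt6_general {B E : Type*}
    [NonUnitalCStarAlgebra B] [PartialOrder B]
    [NormedAddCommGroup E] [NormedSpace ℂ E] [SMul Bᵐᵒᵖ E] [CStarModuleRight B E]
    (hfull : (Submodule.span ℂ {b : B | ∃ x y : E, inner B x y = b}).topologicalClosure = ⊤)
    (u : E → E) (hbij : Function.Bijective u)
    (φ : B →⋆ₙₐ[ℂ] B)
    (hφ : ∀ x y : E, inner B (u x) (u y) = φ (inner B x y)) :
    Function.Bijective φ := by
  have hinj := injective_of_inner_map_eq hfull hφ hbij.injective
  exact ⟨hinj, surjective_of_inner_map_eq hfull hφ hbij.surjective hinj⟩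

theorem stmt6 {B E : Type*}
    [NonUnitalCStarAlgebra B] [PartialOrder B] [StarOrderedRing B]
    [NormedAddCommGroup E] [NormedSpace ℂ E] [SMul Bᵐᵒᵖ E] [CStarModuleRight B E]
    [CompleteSpace E]
    (hfull : (Submodule.span ℂ {b : B | ∃ x y : E, inner B x y = b}).topologicalClosure = ⊤)
    (u : E → E) (hbij : Function.Bijective u)
    (htern : ∀ x y z : E, u (x <• inner B y z) = (u x) <• inner B (u y) (u z))
    (φ : B →⋆ₙₐ[ℂ] B)
    (hφ : ∀ x y : E, inner B (u x) (u y) = φ (inner B x y)) :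
    Function.Bijective φ :=
  stmt6_general hfull u hbij φ hφ
end

section
/- If d₁ and d₂ are derivations of B and δ is simultaneously a d₁-derivation and a d₂-derivation of a full Hilbert B-module E, then d₁ ⊆ d₂ (as unbounded operators) if and only if dom(d₁) ⊆ dom(d₂). -/
/-!
Comparing the two Leibniz rules for `δ` at `b ∈ dom d₁ ⊆ dom d₂` gives `x • d₁ b = x • d₂ b` on
the dense domain of `δ`. Pairing with the inner product and using its continuity, every inner
product `⟪y, x⟫` satisfies `⟪y, x⟫ d₁ b = ⟪y, x⟫ d₂ b`; by fullness this holds for every `a ∈ B`,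
and `a = (d₁ b - d₂ b)⋆` together with the C⋆-identity gives `d₁ b = d₂ b`.
-/

open scoped RightActions

/-- The class `CStarModule` as it stood in Mathlib (December 2024): right Hilbert modules. -/
class OldCStarModule (A E : Type*) [NonUnitalSemiring A] [StarRing A] [Module ℂ A]
    [AddCommGroup E] [Module ℂ E] [PartialOrder A] [SMul Aᵐᵒᵖ E] [Norm A] [Norm E]
    extends Inner A E where
  inner_add_right {x} {y} {z} : inner x (y + z) = inner x y + inner x z
  inner_self_nonneg {x} : 0 ≤ inner x x
  inner_self {x} : inner x x = 0 ↔ x = 0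
  inner_op_smul_right {a : A} {x y : E} : inner x (y <• a) = inner x y * a
  inner_smul_right_complex {z : ℂ} {x} {y} : inner x (z • y) = z • inner x y
  star_inner x y : star (inner x y) = inner y x
  norm_eq_sqrt_norm_inner_self x : ‖x‖ = √‖inner x x‖

namespace CStarRing

theorem eq_of_mul_eq_of_span_dense {B : Type*} [NonUnitalNormedRing B] [StarRing B]
    [CStarRing B] [NormedSpace ℂ B] [IsScalarTower ℂ B B] [SMulCommClass ℂ B B] {s : Set B}
    (hs : (Submodule.span ℂ s).topologicalClosure = ⊤) {c₁ c₂ : B}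
    (h : ∀ a ∈ s, a * c₁ = a * c₂) : c₁ = c₂ := by
  let f : B →L[ℂ] B := (ContinuousLinearMap.mul ℂ B).flip (c₁ - c₂)
  have hspan : Submodule.span ℂ s ≤ LinearMap.ker (f : B →ₗ[ℂ] B) :=
    Submodule.span_le.2 fun a ha => by simp [f, h a ha]
  have hker : star (c₁ - c₂) ∈ LinearMap.ker (f : B →ₗ[ℂ] B) :=
    Submodule.topologicalClosure_minimal _ hspan f.isClosed_ker (hs ▸ Submodule.mem_top)
  rw [← sub_eq_zero, ← star_mul_self_eq_zero_iff]
  simpa only [f, LinearMap.mem_ker, ContinuousLinearMap.coe_coe, ContinuousLinearMap.flip_apply,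
    ContinuousLinearMap.mul_apply', star_sub] using hker

end CStarRing

namespace OldCStarModule

variable {B E : Type*} [NonUnitalCStarAlgebra B] [PartialOrder B] [StarOrderedRing B]
  [NormedAddCommGroup E] [NormedSpace ℂ E] [SMul Bᵐᵒᵖ E] [OldCStarModule B E]

/-- Mathlib's `CStarModule` is a left module: a right Hilbert `B`-module is a left Hilbert
`Bᵐᵒᵖ`-module, which gives access to its Cauchy–Schwarz inequality. -/
instance toCStarModuleMulOpposite : CStarModule Bᵐᵒᵖ E where
  inner x y := MulOpposite.op (inner B x y)
  inner_add_right := by simp [OldCStarModule.inner_add_right]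
  inner_self_nonneg := OldCStarModule.inner_self_nonneg (A := B)
  inner_self := by simp [OldCStarModule.inner_self]
  inner_op_smul_right {a x y} := by
    simpa using congrArg MulOpposite.op
      (OldCStarModule.inner_op_smul_right (A := B) (a := a.unop) (x := x) (y := y))
  inner_smul_right_complex := by simp [OldCStarModule.inner_smul_right_complex]
  star_inner x y := by simp [← MulOpposite.op_star, OldCStarModule.star_inner]
  norm_eq_sqrt_norm_inner_self x := OldCStarModule.norm_eq_sqrt_norm_inner_self (A := B) x

theorem continuous_inner : Continuous fun p : E × E => inner B p.1 p.2 :=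
  MulOpposite.continuous_unop.comp (CStarModule.continuous_inner (A := Bᵐᵒᵖ))

theorem inner_mul_eq_of_dense {s : Set E} (hs : Dense s) {c₁ c₂ : B}
    (h : ∀ x ∈ s, x <• c₁ = x <• c₂) (y x : E) : inner B y x * c₁ = inner B y x * c₂ := by
  have hclosed : IsClosed {x : E | inner B y x * c₁ = inner B y x * c₂} := by
    have hinner : Continuous fun x : E => inner B y x :=
      continuous_inner.comp (continuous_const.prodMk continuous_id)
    exact isClosed_eq (hinner.mul continuous_const) (hinner.mul continuous_const)
  refine hclosed.closure_subset_iff.2 (fun x hx => ?_) (hs.closure_eq ▸ Set.mem_univ x)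
  simp only [Set.mem_ofPred_eq, ← OldCStarModule.inner_op_smul_right, h x hx]

end OldCStarModule

theorem stmt19_general {B E : Type*}
    [NonUnitalCStarAlgebra B] [PartialOrder B] [StarOrderedRing B]
    [NormedAddCommGroup E] [NormedSpace ℂ E] [SMul Bᵐᵒᵖ E] [OldCStarModule B E]
    (hfull : (Submodule.span ℂ {b : B | ∃ x y : E, (inner B x y : B) = b}).topologicalClosure = ⊤)
    (D : Submodule ℂ E) (hdense : Dense (D : Set E)) (δ : D →ₗ[ℂ] E)
    (B₁ B₂ : NonUnitalSubalgebra ℂ B) (d₁ : B₁ →ₗ[ℂ] B) (d₂ : B₂ →ₗ[ℂ] B)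
    (hmod₁ : ∀ (x : D) (b : B₁), (x : E) <• (b : B) ∈ D)
    (hmod₂ : ∀ (x : D) (b : B₂), (x : E) <• (b : B) ∈ D)
    (hder₁ : ∀ (x : D) (b : B₁),
      δ ⟨(x : E) <• (b : B), hmod₁ x b⟩ = δ x <• (b : B) + (x : E) <• d₁ b)
    (hder₂ : ∀ (x : D) (b : B₂),
      δ ⟨(x : E) <• (b : B), hmod₂ x b⟩ = δ x <• (b : B) + (x : E) <• d₂ b) :
    ((B₁ : Set B) ⊆ (B₂ : Set B) ∧
      ∀ (b : B₁) (h : (b : B) ∈ B₂), d₂ ⟨(b : B), h⟩ = d₁ b) ↔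
    (B₁ : Set B) ⊆ (B₂ : Set B) := by
  refine ⟨And.left, fun hsub => ⟨hsub, fun b hb => ?_⟩⟩
  have hsmul : ∀ x ∈ (D : Set E), x <• d₂ ⟨b, hb⟩ = x <• d₁ b := fun x hx =>
    add_left_cancel ((hder₂ ⟨x, hx⟩ ⟨b, hb⟩).symm.trans (hder₁ ⟨x, hx⟩ b))
  refine CStarRing.eq_of_mul_eq_of_span_dense hfull ?_
  rintro - ⟨x, y, rfl⟩
  exact OldCStarModule.inner_mul_eq_of_dense hdense hsmul x y

/-- If `δ` is simultaneously a `d₁`-derivation and a `d₂`-derivation of a full Hilbert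
module, then `d₁ ⊆ d₂` if and only if `dom d₁ ⊆ dom d₂`. -/
theorem stmt19 {B E : Type*}
    [NonUnitalCStarAlgebra B] [PartialOrder B] [StarOrderedRing B]
    [NormedAddCommGroup E] [NormedSpace ℂ E] [SMul Bᵐᵒᵖ E] [OldCStarModule B E]
    [CompleteSpace E]
    (hfull : (Submodule.span ℂ {b : B | ∃ x y : E, (inner B x y : B) = b}).topologicalClosure = ⊤)
    (D : Submodule ℂ E) (hdense : Dense (D : Set E)) (δ : D →ₗ[ℂ] E)
    (B₁ B₂ : NonUnitalSubalgebra ℂ B) (d₁ : B₁ →ₗ[ℂ] B) (d₂ : B₂ →ₗ[ℂ] B)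
    (hleib₁ : ∀ (b b' : B₁) (h : (b : B) * (b' : B) ∈ B₁),
      d₁ ⟨(b : B) * (b' : B), h⟩ = d₁ b * (b' : B) + (b : B) * d₁ b')
    (hleib₂ : ∀ (b b' : B₂) (h : (b : B) * (b' : B) ∈ B₂),
      d₂ ⟨(b : B) * (b' : B), h⟩ = d₂ b * (b' : B) + (b : B) * d₂ b')
    (hmod₁ : ∀ (x : D) (b : B₁), (x : E) <• (b : B) ∈ D)
    (hmod₂ : ∀ (x : D) (b : B₂), (x : E) <• (b : B) ∈ D)
    (hder₁ : ∀ (x : D) (b : B₁),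
      δ ⟨(x : E) <• (b : B), hmod₁ x b⟩ = δ x <• (b : B) + (x : E) <• d₁ b)
    (hder₂ : ∀ (x : D) (b : B₂),
      δ ⟨(x : E) <• (b : B), hmod₂ x b⟩ = δ x <• (b : B) + (x : E) <• d₂ b) :
    ((B₁ : Set B) ⊆ (B₂ : Set B) ∧
      ∀ (b : B₁) (h : (b : B) ∈ B₂), d₂ ⟨(b : B), h⟩ = d₁ b) ↔
    (B₁ : Set B) ⊆ (B₂ : Set B) :=
  stmt19_general hfull D hdense δ B₁ B₂ d₁ d₂ hmod₁ hmod₂ hder₁ hder₂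
end
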